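/- arXiv:1002.0758 — 9 statements merged into one kernel-verified Lean document; each statement's English description precedes it below -/
import Mathlib

section
/- Let A be an n×n matrix over the max-plus semiring whose Kleene star A* stabilizes (equals I ⊕ A ⊕ ... ⊕ A^{n-1}). Then the solution set {x : A ⊗ x ≤ x} is exactly the set of max-plus linear combinations of the columns of A*. -/
open Finset

/-- The max-plus semiring carrier: ℝ ∪ {-∞}. Addition of the semiring is `⊔` (max),
multiplication is `+` (with `⊥ + x = ⊥`), zero is `⊥`, unit is `0`. -/
abbrev MP := WithBot ℝ

/-- Max-plus matrix-vector product: `(A ⊗ x) i = max_j (A i j + x j)`. -/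
def mvMul {n : ℕ} (A : Matrix (Fin n) (Fin n) MP) (x : Fin n → MP) : Fin n → MP :=
  fun i => univ.sup fun j => A i j + x j

/-- Max-plus matrix-matrix product. -/
def mmMul {n : ℕ} (A B : Matrix (Fin n) (Fin n) MP) : Matrix (Fin n) (Fin n) MP :=
  fun i j => univ.sup fun k => A i k + B k j

/-- Max-plus identity matrix: `0` on the diagonal, `⊥ = -∞` elsewhere. -/
def mpI {n : ℕ} : Matrix (Fin n) (Fin n) MP := fun i j => if i = j then 0 else ⊥

/-- Max-plus matrix powers. -/
def mpPow {n : ℕ} (A : Matrix (Fin n) (Fin n) MP) : ℕ → Matrix (Fin n) (Fin n) MP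
  | 0 => mpI
  | m + 1 => mmMul A (mpPow A m)

/-- The `i`-th multiorder relation: `x ≤_i y` iff `x_i ≠ -∞`, `y_i ≠ -∞` and
`x_j - x_i ≤ y_j - y_i` for all `j` (stated multiplicatively to avoid subtraction). -/
def leI {n : ℕ} (i : Fin n) (x y : Fin n → MP) : Prop :=
  x i ≠ ⊥ ∧ y i ≠ ⊥ ∧ ∀ j, x j + y i ≤ y j + x i

/-- The max-plus cone generated by a finite set `S` of vectors: all max-plus linear
combinations `⊕_{z ∈ S} α_z ⊗ z`. -/
def genBy {n : ℕ} (S : Finset (Fin n → MP)) : Set (Fin n → MP) :=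
  {x | ∃ α : (Fin n → MP) → MP, ∀ j, x j = S.sup fun z => α z + z j}

/-- A finite set of vectors is (max-plus) independent if no element is a max-plus
combination of the others. -/
def mpIndep {n : ℕ} (S : Finset (Fin n → MP)) : Prop :=
  ∀ s ∈ S, s ∉ genBy (S.erase s)

/-!
If `A ⊗ x ≤ x`, then by induction `A^m ⊗ x ≤ x` for every `m`, hence `A* ⊗ x ≤ x`; since
`A* ≥ I` also `A* ⊗ x ≥ x`, so `x = A* ⊗ x` is the combination of the columns of `A*` with
coefficients `x`. Conversely, stabilization of the star gives `A ⊗ A* ≤ A*`, so every column of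
`A*` solves `A ⊗ x ≤ x`, and the solutions are closed under max-plus combinations.
-/

theorem WithBot.add_finset_sup {α ι : Type*} [LinearOrder α] [Add α] [AddLeftMono α]
    (s : Finset ι) (f : ι → WithBot α) (a : WithBot α) :
    a + s.sup f = s.sup fun k => a + f k :=
  apply_sup_eq_sup_comp (a + ·) (fun _ _ => (monotone_id.const_add a).map_max)
    (WithBot.add_bot a)

theorem WithBot.finset_sup_add {α ι : Type*}
    [LinearOrder α] [AddCommSemigroup α] [AddLeftMono α]
    (s : Finset ι) (f : ι → WithBot α) (a : WithBot α) :
    s.sup f + a = s.sup fun k => f k + a := by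
  simp only [add_comm _ a, WithBot.add_finset_sup]

section Pow

variable {n : ℕ} (A : Matrix (Fin n) (Fin n) MP)

theorem mpPow_zero_self (i : Fin n) : mpPow A 0 i i = 0 := by
  simp [mpPow, mpI]

theorem add_mpPow_le_mpPow_succ (m : ℕ) (i j k : Fin n) :
    A i j + mpPow A m j k ≤ mpPow A (m + 1) i k :=
  le_sup (f := fun l => A i l + mpPow A m l k) (mem_univ j)

theorem mpPow_add_le_of_mvMul_le {x : Fin n → MP} (hx : ∀ i, mvMul A x i ≤ x i) (m : ℕ) :
    ∀ i j, mpPow A m i j + x j ≤ x i := by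
  induction m with
  | zero =>
    intro i j
    by_cases h : i = j <;> simp [mpPow, mpI, h]
  | succ m ih =>
    intro i j
    change univ.sup (fun k => A i k + mpPow A m k j) + x j ≤ x i
    rw [WithBot.finset_sup_add]
    refine Finset.sup_le fun k _ => ?_
    calc A i k + mpPow A m k j + x j = A i k + (mpPow A m k j + x j) := add_assoc _ _ _
      _ ≤ A i k + x k := add_le_add_right (ih k j) _
      _ ≤ mvMul A x i := le_sup (f := fun l => A i l + x l) (mem_univ k)
      _ ≤ x i := hx i

end Pow

section Star

variable {n : ℕ} {A Astar : Matrix (Fin n) (Fin n) MP}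

theorem add_star_le_of_mvMul_le
    (hdef : ∀ i j, Astar i j = (Finset.range n).sup fun m => mpPow A m i j)
    {x : Fin n → MP} (hx : ∀ i, mvMul A x i ≤ x i) (i j : Fin n) :
    x j + Astar i j ≤ x i := by
  rw [hdef, WithBot.add_finset_sup]
  exact Finset.sup_le fun m _ => (add_comm _ _).trans_le (mpPow_add_le_of_mvMul_le A hx m i j)

theorem add_star_le_star
    (hdef : ∀ i j, Astar i j = (Finset.range n).sup fun m => mpPow A m i j)
    (hstab : ∀ m i j, mpPow A m i j ≤ Astar i j) (i j k : Fin n) :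
    A i j + Astar j k ≤ Astar i k := by
  rw [hdef j k, WithBot.add_finset_sup]
  exact Finset.sup_le fun m _ => (add_mpPow_le_mpPow_succ A m i j k).trans (hstab (m + 1) i k)

theorem mvMul_star_combination_le
    (hdef : ∀ i j, Astar i j = (Finset.range n).sup fun m => mpPow A m i j)
    (hstab : ∀ m i j, mpPow A m i j ≤ Astar i j) (α : Fin n → MP) (i : Fin n) :
    mvMul A (fun i => univ.sup fun j => α j + Astar i j) i ≤
      univ.sup fun j => α j + Astar i j := by
  refine Finset.sup_le fun j _ => ?_
  rw [WithBot.add_finset_sup]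
  refine Finset.sup_le fun k _ => ?_
  calc A i j + (α k + Astar j k) = α k + (A i j + Astar j k) := add_left_comm _ _ _
    _ ≤ α k + Astar i k := add_le_add_right (add_star_le_star hdef hstab i j k) _
    _ ≤ univ.sup fun j => α j + Astar i j :=
      le_sup (f := fun j => α j + Astar i j) (mem_univ k)

end Star

/-- If the Kleene star of `A` stabilizes, then `{x : A ⊗ x ≤ x}` is exactly the set of
max-plus linear combinations of the columns of `A*`. -/
theorem maxplus_solution_set_generated_by_star_columns {n : ℕ}
    (A : Matrix (Fin n) (Fin n) MP) (Astar : Matrix (Fin n) (Fin n) MP)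
    (hdef : ∀ i j, Astar i j = (Finset.range n).sup fun m => mpPow A m i j)
    (hstab : ∀ m i j, mpPow A m i j ≤ Astar i j) :
    {x : Fin n → MP | ∀ i, mvMul A x i ≤ x i}
      = {x : Fin n → MP | ∃ α : Fin n → MP, ∀ i, x i = univ.sup fun j => α j + Astar i j} := by
  ext x
  constructor
  · intro hx
    have hI : ∀ i, (0 : MP) ≤ Astar i i := fun i => mpPow_zero_self A i ▸ hstab 0 i i
    refine ⟨x, fun i => le_antisymm ?_ <|
      Finset.sup_le fun j _ => add_star_le_of_mvMul_le hdef hx i j⟩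
    calc x i = x i + 0 := (add_zero _).symm
      _ ≤ x i + Astar i i := add_le_add_right (hI i) _
      _ ≤ univ.sup fun j => x j + Astar i j :=
        le_sup (f := fun j => x j + Astar i j) (mem_univ i)
  · rintro ⟨α, hα⟩
    obtain rfl : x = fun i => univ.sup fun j => α j + Astar i j := funext hα
    exact mvMul_star_combination_le hdef hstab α
end

section
/- Let A be an n×n max-plus matrix equal to the identity except in two rows k ≠ m, where row k is e'_k ⊕ ⊕_{l∈L₁} a_{kl}⊗e'_l and row m is e'_m ⊕ ⊕_{l∈L₂} a_{ml}⊗e'_l, with L₁ = {l ≠ k : a_{kl} ≠ -∞}, L₂ = {l ≠ m : a_{ml} ≠ -∞}. If a_{km} + a_{mk} > 0, then the solution set {x : A ⊗ x ≤ x} consists exactly of the vectors x with x_i = -∞ for all i ∈ L₁ ∪ L₂ ∪ {k, m}. -/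
open Finset

/-! A solution of `A ⊗ x ≤ x` satisfies `a_{km} + x_m ≤ x_k` and `a_{mk} + x_k ≤ x_m`, hence
`(a_{km} + a_{mk}) + x_k ≤ x_k`; a positive cycle weight forces `x_k = -∞`, and likewise
`x_m = -∞`. Then `a_{kl} + x_l ≤ x_k = -∞` kills `x_l` for every `l ∈ L₁`, and similarly on `L₂`.
Conversely, for such an `x` rows `k` and `m` of `A ⊗ x` are `-∞`, and the identity rows impose
nothing. -/

theorem WithBot.eq_bot_of_pos_add_le {α : Type*} [AddCommMonoid α] [LinearOrder α]
    [IsOrderedCancelAddMonoid α] {c u : WithBot α} (hc : 0 < c) (h : c + u ≤ u) : u = ⊥ := by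
  induction u with
  | bot => rfl
  | coe s =>
    lift c to α using hc.ne_bot
    have : c + s ≤ s := by exact_mod_cast h
    exact absurd this (not_le.2 (lt_add_of_pos_left s (by exact_mod_cast hc)))

section
variable {n : ℕ} {A : Matrix (Fin n) (Fin n) MP} {x : Fin n → MP}

theorem mvMul_le_iff {i : Fin n} : mvMul A x i ≤ x i ↔ ∀ j, A i j + x j ≤ x i := by
  simp [mvMul]

theorem mvMul_eq_of_row_eq_mpI {i : Fin n} (hA : ∀ j, A i j = mpI i j) : mvMul A x i = x i := by
  refine le_antisymm (mvMul_le_iff.2 fun j => ?_) ?_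
  · by_cases hij : i = j
    · subst hij; simp [hA, mpI]
    · simp [hA, mpI, hij]
  · simpa [mvMul, hA, mpI] using Finset.le_sup (f := fun j => A i j + x j) (mem_univ i)

theorem mvMul_apply_eq_bot {i : Fin n} (h : ∀ j, A i j ≠ ⊥ → x j = ⊥) : mvMul A x i = ⊥ := by
  refine le_bot_iff.1 (Finset.sup_le fun j _ => ?_)
  by_cases hij : A i j = ⊥
  · simp [hij]
  · simp [h j hij]

section Solution
variable (hx : ∀ i, mvMul A x i ≤ x i)
include hx

theorem eq_bot_of_mvMul_le_of_eq_bot {i j : Fin n} (hi : x i = ⊥) (hij : A i j ≠ ⊥) :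
    x j = ⊥ := by
  have := mvMul_le_iff.1 (hx i) j
  rw [hi, le_bot_iff, WithBot.add_eq_bot] at this
  exact this.resolve_left hij

theorem eq_bot_of_mvMul_le_of_pos_cycle {k m : Fin n} (hcyc : 0 < A k m + A m k) : x k = ⊥ :=
  WithBot.eq_bot_of_pos_add_le hcyc <| calc
    A k m + A m k + x k = A k m + (A m k + x k) := add_assoc ..
    _ ≤ A k m + x m := add_le_add_right (mvMul_le_iff.1 (hx m) k) _
    _ ≤ x k := mvMul_le_iff.1 (hx k) m

end Solution

end

theorem maxplus_two_modified_rows_positive_cycle_general {n : ℕ}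
    (A : Matrix (Fin n) (Fin n) MP) (k m : Fin n)
    (hrow : ∀ i, i ≠ k → i ≠ m → ∀ j, A i j = mpI i j)
    (hcyc : 0 < A k m + A m k) :
    {x : Fin n → MP | ∀ i, mvMul A x i ≤ x i}
      = {x : Fin n → MP |
          ∀ i, ((i ≠ k ∧ A k i ≠ ⊥) ∨ (i ≠ m ∧ A m i ≠ ⊥) ∨ i = k ∨ i = m) → x i = ⊥} := by
  ext x
  constructor
  · intro hx i hi
    have hk : x k = ⊥ := eq_bot_of_mvMul_le_of_pos_cycle hx hcyc
    have hm : x m = ⊥ := eq_bot_of_mvMul_le_of_pos_cycle hx (by rwa [add_comm])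
    rcases hi with ⟨-, hki⟩ | ⟨-, hmi⟩ | rfl | rfl
    exacts [eq_bot_of_mvMul_le_of_eq_bot hx hk hki, eq_bot_of_mvMul_le_of_eq_bot hx hm hmi, hk, hm]
  · intro hx i
    by_cases hik : i = k
    · refine (mvMul_apply_eq_bot fun j hj => hx j ?_).trans_le bot_le
      by_cases hjk : j = k
      exacts [Or.inr (Or.inr (Or.inl hjk)), Or.inl ⟨hjk, hik ▸ hj⟩]
    by_cases him : i = m
    · refine (mvMul_apply_eq_bot fun j hj => hx j ?_).trans_le bot_le
      by_cases hjm : j = m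
      exacts [Or.inr (Or.inr (Or.inr hjm)), Or.inr (Or.inl ⟨hjm, him ▸ hj⟩)]
    exact (mvMul_eq_of_row_eq_mpI (hrow i hik him)).le

/-- If `A` equals the identity except in rows `k ≠ m` (with diagonal entries `0` there), and the
two-cycle `k → m → k` has positive weight (`A k m + A m k > 0`), then the solutions of
`A ⊗ x ≤ x` are exactly the vectors vanishing (`= -∞`) on `L₁ ∪ L₂ ∪ {k, m}`, where
`L₁ = {l ≠ k : A k l ≠ -∞}` and `L₂ = {l ≠ m : A m l ≠ -∞}`. -/
theorem maxplus_two_modified_rows_positive_cycle {n : ℕ}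
    (A : Matrix (Fin n) (Fin n) MP) (k m : Fin n) (hkm : k ≠ m)
    (hkk : A k k = 0) (hmm : A m m = 0)
    (hrow : ∀ i, i ≠ k → i ≠ m → ∀ j, A i j = mpI i j)
    (hcyc : 0 < A k m + A m k) :
    {x : Fin n → MP | ∀ i, mvMul A x i ≤ x i}
      = {x : Fin n → MP |
          ∀ i, ((i ≠ k ∧ A k i ≠ ⊥) ∨ (i ≠ m ∧ A m i ≠ ⊥) ∨ i = k ∨ i = m) → x i = ⊥} :=
  maxplus_two_modified_rows_positive_cycle_general A k m hrow hcyc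
end

section
/- Let A be an n×n max-plus matrix equal to the identity except in rows k ≠ l, with A_{kl} = α and A_{lk} = β the only possibly-finite off-diagonal entries in columns l and k respectively of those rows, together with other off-diagonal entries in rows k and l. If α + β ≤ 0 (including the case where α or β is -∞), then the Kleene star A* is given by A* = I ⊕ A ⊕ A², and A ⊗ A* = A* ⊗ A ≤ A*. -/
open Finset

/-!
Write `S = I ⊕ A ⊕ A²`. Everything follows from `A³ ≤ S`: then `A ⊗ S = A ⊕ A² ⊕ A³ ≤ S`, so all
powers stay below `S` by induction, and `A ⊗ S = S ⊗ A` since both equal `A ⊕ A² ⊕ A³`.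
Rows of `A` other than `k` and `l` are identity rows, so a walk of length three from `k` that
enters such a row, or that waits at a zero loop, is dominated by a walk of length at most two.
The only other walk is `k → l → k → j`, and the cycle `k → l → k` has weight `≤ 0`. Row `l` is
symmetric.
-/

section MaxPlusMatrix

variable {n : ℕ}

lemma MP.add_finsetSup {ι : Type*} (s : Finset ι) (a : MP) (f : ι → MP) :
    a + s.sup f = s.sup fun x => a + f x :=
  apply_sup_eq_sup_comp (a + ·) (fun b c => (max_add_add_left a b c).symm) (WithBot.add_bot a)

lemma MP.finsetSup_add {ι : Type*} (s : Finset ι) (a : MP) (f : ι → MP) :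
    s.sup f + a = s.sup fun x => f x + a := by
  simp only [add_comm _ a, MP.add_finsetSup]

lemma le_mmMul (A B : Matrix (Fin n) (Fin n) MP) (i j p : Fin n) :
    A i p + B p j ≤ mmMul A B i j :=
  le_sup (f := fun q => A i q + B q j) (mem_univ p)

lemma mmMul_le {A B : Matrix (Fin n) (Fin n) MP} {i j : Fin n} {c : MP}
    (h : ∀ p, A i p + B p j ≤ c) : mmMul A B i j ≤ c :=
  Finset.sup_le fun p _ => h p

lemma mpI_add_le (x : Fin n → MP) (i p : Fin n) : mpI i p + x p ≤ x i := by
  by_cases h : i = p <;> simp [mpI, h]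

lemma add_mpI_le (x : Fin n → MP) (p j : Fin n) : x p + mpI p j ≤ x j := by
  rw [add_comm]
  by_cases h : p = j <;> simp [mpI, h]

lemma mmMul_mpI_left (A : Matrix (Fin n) (Fin n) MP) : mmMul mpI A = A := by
  funext i j
  refine le_antisymm (mmMul_le fun p => mpI_add_le (A · j) i p) ?_
  simpa [mpI] using le_mmMul mpI A i j i

lemma mmMul_mpI_right (A : Matrix (Fin n) (Fin n) MP) : mmMul A mpI = A := by
  funext i j
  refine le_antisymm (mmMul_le fun p => add_mpI_le (A i) p j) ?_
  simpa [mpI] using le_mmMul A mpI i j j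

lemma mmMul_assoc (A B C : Matrix (Fin n) (Fin n) MP) :
    mmMul (mmMul A B) C = mmMul A (mmMul B C) := by
  funext i j
  simp only [mmMul, MP.finsetSup_add, MP.add_finsetSup, add_assoc]
  exact Finset.sup_comm _ _ _

lemma mmMul_sup_right (A B C : Matrix (Fin n) (Fin n) MP) (i j : Fin n) :
    mmMul A (fun i j => B i j ⊔ C i j) i j = mmMul A B i j ⊔ mmMul A C i j := by
  simp only [mmMul, ← max_add_add_left]
  exact sup_sup

lemma mmMul_sup_left (A B C : Matrix (Fin n) (Fin n) MP) (i j : Fin n) :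
    mmMul (fun i j => B i j ⊔ C i j) A i j = mmMul B A i j ⊔ mmMul C A i j := by
  simp only [mmMul, ← max_add_add_right]
  exact sup_sup

lemma mmMul_mono_right (A : Matrix (Fin n) (Fin n) MP) {B C : Matrix (Fin n) (Fin n) MP}
    (h : ∀ i j, B i j ≤ C i j) (i j : Fin n) : mmMul A B i j ≤ mmMul A C i j :=
  mmMul_le fun p => (add_le_add_right (h p j) _).trans (le_mmMul A C i j p)

lemma mmMul_apply_of_row_eq_mpI {A : Matrix (Fin n) (Fin n) MP} {i : Fin n}
    (hi : ∀ j, A i j = mpI i j) (B : Matrix (Fin n) (Fin n) MP) (j : Fin n) :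
    mmMul A B i j = B i j := by
  rw [← congrFun (mmMul_mpI_left B) i]
  simp only [mmMul, hi]

lemma add_le_of_row_eq_mpI {A : Matrix (Fin n) (Fin n) MP} {q : Fin n}
    (hq : ∀ j, A q j = mpI q j) (p j : Fin n) : A p q + A q j ≤ A p j := by
  rw [hq]
  exact add_mpI_le (A p) q j

end MaxPlusMatrix

section TwoModifiedRows

variable {n : ℕ} {A : Matrix (Fin n) (Fin n) MP} {k l : Fin n}

lemma mmMul_self_apply_le (hll : A l l = 0)
    (hrow : ∀ i, i ≠ k → i ≠ l → ∀ j, A i j = mpI i j) (j : Fin n) :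
    mmMul A A l j ≤ A l j ⊔ (A l k + A k j) := by
  refine mmMul_le fun q => ?_
  by_cases hqk : q = k
  · rw [hqk]
    exact le_sup_right
  by_cases hql : q = l
  · rw [hql, hll, zero_add]
    exact le_sup_left
  · exact (add_le_of_row_eq_mpI (hrow q hqk hql) l j).trans le_sup_left

lemma mmMul_mmMul_self_apply_le (hkk : A k k = 0) (hll : A l l = 0)
    (hrow : ∀ i, i ≠ k → i ≠ l → ∀ j, A i j = mpI i j) (hcyc : A k l + A l k ≤ 0)
    (j : Fin n) : mmMul A (mmMul A A) k j ≤ A k j ⊔ mmMul A A k j := by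
  refine mmMul_le fun p => ?_
  by_cases hpk : p = k
  · rw [hpk, hkk, zero_add]
    exact le_sup_right
  by_cases hpl : p = l
  · rw [hpl]
    have hcycle : A k l + (A l k + A k j) ≤ A k j := by
      calc A k l + (A l k + A k j) = (A k l + A l k) + A k j := (add_assoc _ _ _).symm
        _ ≤ 0 + A k j := add_le_add_left hcyc _
        _ = A k j := zero_add _
    calc A k l + mmMul A A l j ≤ A k l + (A l j ⊔ (A l k + A k j)) :=
          add_le_add_right (mmMul_self_apply_le hll hrow j) _
      _ = (A k l + A l j) ⊔ (A k l + (A l k + A k j)) := (max_add_add_left _ _ _).symm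
      _ ≤ A k j ⊔ mmMul A A k j :=
          sup_le (le_mmMul A A k j l |>.trans le_sup_right) (hcycle.trans le_sup_left)
  · rw [mmMul_apply_of_row_eq_mpI (hrow p hpk hpl)]
    exact (le_mmMul A A k j p).trans le_sup_right

lemma mmMul_mmMul_self_le (hkk : A k k = 0) (hll : A l l = 0)
    (hrow : ∀ i, i ≠ k → i ≠ l → ∀ j, A i j = mpI i j) (hcyc : A k l + A l k ≤ 0)
    (i j : Fin n) : mmMul A (mmMul A A) i j ≤ mpI i j ⊔ A i j ⊔ mmMul A A i j := by
  refine le_trans ?_ (sup_le_sup_right le_sup_right _)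
  by_cases hik : i = k
  · rw [hik]
    exact mmMul_mmMul_self_apply_le hkk hll hrow hcyc j
  by_cases hil : i = l
  · rw [hil]
    exact mmMul_mmMul_self_apply_le hll hkk (fun i hl hk => hrow i hk hl)
      (by rwa [add_comm]) j
  · rw [mmMul_apply_of_row_eq_mpI (hrow i hik hil)]
    exact le_sup_right

end TwoModifiedRows

theorem maxplus_two_modified_rows_star_stabilizes_general {n : ℕ}
    (A : Matrix (Fin n) (Fin n) MP) (k l : Fin n)
    (hkk : A k k = 0) (hll : A l l = 0)
    (hrow : ∀ i, i ≠ k → i ≠ l → ∀ j, A i j = mpI i j)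
    (hcyc : A k l + A l k ≤ 0) :
    (∀ m i j, mpPow A m i j ≤ mpI i j ⊔ A i j ⊔ mmMul A A i j) ∧
    mmMul A (fun i j => mpI i j ⊔ A i j ⊔ mmMul A A i j)
      = mmMul (fun i j => mpI i j ⊔ A i j ⊔ mmMul A A i j) A ∧
    (∀ i j, mmMul A (fun i j => mpI i j ⊔ A i j ⊔ mmMul A A i j) i j
      ≤ mpI i j ⊔ A i j ⊔ mmMul A A i j) := by
  have hmul_star : ∀ i j, mmMul A (fun i j => mpI i j ⊔ A i j ⊔ mmMul A A i j) i j
      = A i j ⊔ mmMul A A i j ⊔ mmMul A (mmMul A A) i j := fun i j => by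
    rw [mmMul_sup_right A (fun i j => mpI i j ⊔ A i j), mmMul_sup_right, mmMul_mpI_right]
  have hstar_mul : ∀ i j, mmMul (fun i j => mpI i j ⊔ A i j ⊔ mmMul A A i j) A i j
      = A i j ⊔ mmMul A A i j ⊔ mmMul A (mmMul A A) i j := fun i j => by
    rw [mmMul_sup_left A (fun i j => mpI i j ⊔ A i j), mmMul_sup_left, mmMul_mpI_left,
      mmMul_assoc]
  have habsorb : ∀ i j, mmMul A (fun i j => mpI i j ⊔ A i j ⊔ mmMul A A i j) i j
      ≤ mpI i j ⊔ A i j ⊔ mmMul A A i j := fun i j => by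
    rw [hmul_star]
    refine sup_le (sup_le_sup_right le_sup_right _) ?_
    exact mmMul_mmMul_self_le hkk hll hrow hcyc i j
  refine ⟨fun m => ?_, funext fun i => funext fun j => (hmul_star i j).trans (hstar_mul i j).symm,
    habsorb⟩
  induction m with
  | zero => exact fun i j => le_sup_left.trans le_sup_left
  | succ m ih => exact fun i j => (mmMul_mono_right A ih i j).trans (habsorb i j)

/-- If `A` equals the identity except in rows `k ≠ l` (with diagonal entries `0` there) and the
cycle weight `A k l + A l k` is non-positive, then the Kleene star stabilizes:
`A* = I ⊕ A ⊕ A²`, and `A ⊗ A* = A* ⊗ A ≤ A*`. -/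
theorem maxplus_two_modified_rows_star_stabilizes {n : ℕ}
    (A : Matrix (Fin n) (Fin n) MP) (k l : Fin n) (hkl : k ≠ l)
    (hkk : A k k = 0) (hll : A l l = 0)
    (hrow : ∀ i, i ≠ k → i ≠ l → ∀ j, A i j = mpI i j)
    (hcyc : A k l + A l k ≤ 0) :
    (∀ m i j, mpPow A m i j ≤ mpI i j ⊔ A i j ⊔ mmMul A A i j) ∧
    mmMul A (fun i j => mpI i j ⊔ A i j ⊔ mmMul A A i j)
      = mmMul (fun i j => mpI i j ⊔ A i j ⊔ mmMul A A i j) A ∧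
    (∀ i j, mmMul A (fun i j => mpI i j ⊔ A i j ⊔ mmMul A A i j) i j
      ≤ mpI i j ⊔ A i j ⊔ mmMul A A i j) :=
  maxplus_two_modified_rows_star_stabilizes_general A k l hkk hll hrow hcyc
end

section
/- Multiorder principle (necessity): Let K ⊆ (ℝ ∪ {-∞})ⁿ be a max-plus cone generated by a finite set S, and let y ∈ S with y ≠ the all -∞ vector. If for every i with y_i ≠ -∞ there exists z^i ∈ S with z^i ≠ y (up to scalar) such that z^i ≤_i y, then y = ⊕_{i ∈ supp(y)} (y_i - z^i_i) ⊗ z^i, i.e., y is a max-plus combination of the z^i. -/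
open Finset

lemma WithBot.coe_sub_add_le_of_add_le {a b : ℝ} {u v : WithBot ℝ} (h : u + a ≤ v + b) :
    ((a - b : ℝ) : WithBot ℝ) + u ≤ v :=
  calc ((a - b : ℝ) : WithBot ℝ) + u = u + a + ((-b : ℝ) : WithBot ℝ) := by
        rw [add_comm, add_assoc, ← WithBot.coe_add, sub_eq_add_neg]
    _ ≤ v + b + ((-b : ℝ) : WithBot ℝ) := by gcongr
    _ = v := by rw [add_assoc, ← WithBot.coe_add, add_neg_cancel, WithBot.coe_zero, add_zero]

namespace leI

variable {n : ℕ} {i : Fin n} {x y : Fin n → MP}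

lemma coe_sub_add_le (h : leI i x y) (j : Fin n) :
    (((y i).unbotD 0 - (x i).unbotD 0 : ℝ) : MP) + x j ≤ y j := by
  obtain ⟨hx, hy, hle⟩ := h
  lift x i to ℝ using hx with a
  lift y i to ℝ using hy with b
  exact WithBot.coe_sub_add_le_of_add_le (hle j)

lemma coe_sub_add_self (h : leI i x y) :
    (((y i).unbotD 0 - (x i).unbotD 0 : ℝ) : MP) + x i = y i := by
  obtain ⟨hx, hy, -⟩ := h
  lift x i to ℝ using hx with a
  lift y i to ℝ using hy with b
  rw [WithBot.unbotD_coe, WithBot.unbotD_coe, ← WithBot.coe_add, sub_add_cancel]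

end leI

theorem maxplus_multiorder_necessity_general {n : ℕ} (S : Finset (Fin n → MP))
    (y : Fin n → MP)
    (z : Fin n → (Fin n → MP))
    (hz : ∀ i, y i ≠ ⊥ →
      z i ∈ S ∧ leI i (z i) y ∧ ¬ ∃ c : ℝ, ∀ j, z i j = (c : MP) + y j) :
    ∃ α : Fin n → MP, (∀ i, y i ≠ ⊥ → α i + z i i = y i) ∧
      ∀ j, y j = univ.sup fun i => if y i = ⊥ then ⊥ else α i + z i j := by
  let α : Fin n → MP := fun i => ((y i).unbotD 0 - (z i i).unbotD 0 : ℝ)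
  have hα_self : ∀ i, y i ≠ ⊥ → α i + z i i = y i := fun i hi =>
    (hz i hi).2.1.coe_sub_add_self
  refine ⟨α, hα_self, fun j => le_antisymm ?_ ?_⟩
  · -- the `j`-th term of the combination already attains `y j`
    by_cases hj : y j = ⊥
    · simp [hj]
    · refine Finset.le_sup_of_le (mem_univ j) ?_
      rw [if_neg hj, hα_self j hj]
  · refine Finset.sup_le fun i _ => ?_
    split_ifs with hi
    · exact bot_le
    · exact (hz i hi).2.1.coe_sub_add_le j

/-- Multiorder principle, necessity: if `y ∈ S` is non-zero and for every `i ∈ supp(y)` there is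
`z^i ∈ S`, not proportional to `y`, with `z^i ≤_i y`, then
`y = ⊕_{i ∈ supp(y)} (y_i ⊗ (z^i_i)⁻¹) ⊗ z^i` is a max-plus combination of the `z^i`. -/
theorem maxplus_multiorder_necessity {n : ℕ} (S : Finset (Fin n → MP))
    (y : Fin n → MP) (hy : y ∈ S) (hy0 : y ≠ fun _ => ⊥)
    (z : Fin n → (Fin n → MP))
    (hz : ∀ i, y i ≠ ⊥ →
      z i ∈ S ∧ leI i (z i) y ∧ ¬ ∃ c : ℝ, ∀ j, z i j = (c : MP) + y j) :
    ∃ α : Fin n → MP, (∀ i, y i ≠ ⊥ → α i + z i i = y i) ∧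
      ∀ j, y j = univ.sup fun i => if y i = ⊥ then ⊥ else α i + z i j :=
  maxplus_multiorder_necessity_general S y z hz
end

section
/- Multiorder principle (sufficiency): Let K be a max-plus cone generated by a finite set S ⊆ (ℝ∪{-∞})ⁿ, and let y ∈ S. If y = ⊕_k α_k ⊗ z^k for vectors z^k ∈ S and scalars α_k, then for every i ∈ supp(y) there exists k(i) with y_i = α_{k(i)} + z^{k(i)}_i and α_{k(i)} + z^{k(i)}_j ≤ y_j for all j; consequently z^{k(i)} ≤_i y. Hence if y is i-minimal in S for some i (i.e., no z ∈ S with z not proportional to y satisfies z ≤_i y), then y cannot be written as a max-plus combination of elements of S not proportional to y. -/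
/-!
Since a finite max with value `y i ≠ -∞` is attained, some term `α k + z k i`
equals `y i`, while every term `α k + z k j` is bounded by `y j`; subtracting the first from
the second gives `z k ≤_i y`. Hence a representation of an `i`-minimal `y` must use a generator
`z k ≤_i y`, which minimality forces to be proportional to `y`. -/

open Finset

lemma exists_eq_add_of_eq_sup {ι : Type*} [Fintype ι] {n : ℕ} {y : Fin n → MP}
    {z : ι → Fin n → MP} {α : ι → MP} (hrep : ∀ j, y j = univ.sup fun k => α k + z k j)
    {i : Fin n} (hi : y i ≠ ⊥) : ∃ k, y i = α k + z k i := by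
  have hne : (univ : Finset ι).Nonempty := by
    rw [univ_nonempty_iff]
    by_contra h
    rw [not_nonempty_iff] at h
    exact hi (by rw [hrep i, univ_eq_empty, sup_empty])
  obtain ⟨k, -, hk⟩ := exists_mem_eq_sup univ hne fun k => α k + z k i
  exact ⟨k, (hrep i).trans hk⟩

lemma leI_of_eq_add_of_add_le {n : ℕ} {i : Fin n} {x y : Fin n → MP} {a : MP}
    (hi : y i ≠ ⊥) (hyi : y i = a + x i) (hle : ∀ j, a + x j ≤ y j) : leI i x y := by
  have hxi : x i ≠ ⊥ := fun h => hi (by rw [hyi, h, WithBot.add_bot])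
  refine ⟨hxi, hi, fun j => ?_⟩
  calc x j + y i = (a + x j) + x i := by rw [hyi, add_left_comm, add_assoc]
    _ ≤ y j + x i := add_le_add_left (hle j) _

lemma exists_leI_of_eq_sup {ι : Type*} [Fintype ι] {n : ℕ} {y : Fin n → MP}
    {z : ι → Fin n → MP} {α : ι → MP} (hrep : ∀ j, y j = univ.sup fun k => α k + z k j)
    {i : Fin n} (hi : y i ≠ ⊥) :
    ∃ k, y i = α k + z k i ∧ (∀ j, α k + z k j ≤ y j) ∧ leI i (z k) y := by
  obtain ⟨k, hk⟩ := exists_eq_add_of_eq_sup hrep hi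
  have hle : ∀ j, α k + z k j ≤ y j := fun j => by
    rw [hrep j]
    exact le_sup (f := fun k => α k + z k j) (mem_univ k)
  exact ⟨k, hk, hle, leI_of_eq_add_of_add_le hi hk hle⟩

theorem maxplus_multiorder_sufficiency_general {n m : ℕ} (S : Finset (Fin n → MP))
    (y : Fin n → MP)
    (z : Fin m → (Fin n → MP)) (α : Fin m → MP)
    (hrep : ∀ j, y j = univ.sup fun k => α k + z k j) :
    (∀ i, y i ≠ ⊥ →
      ∃ k, y i = α k + z k i ∧ (∀ j, α k + z k j ≤ y j) ∧ leI i (z k) y) ∧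
    ((∃ i, y i ≠ ⊥ ∧ ∀ w ∈ S, leI i w y → ∃ c : ℝ, ∀ j, w j = (c : MP) + y j) →
      ¬ ∃ (m' : ℕ) (z' : Fin m' → (Fin n → MP)) (α' : Fin m' → MP),
          (∀ k, z' k ∈ S ∧ ¬ ∃ c : ℝ, ∀ j, z' k j = (c : MP) + y j) ∧
          ∀ j, y j = univ.sup fun k => α' k + z' k j) := by
  refine ⟨fun i hi => exists_leI_of_eq_sup hrep hi, ?_⟩
  rintro ⟨i, hi, hmin⟩ ⟨m', z', α', hz', hrep'⟩
  obtain ⟨k, -, -, hleI⟩ := exists_leI_of_eq_sup hrep' hi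
  exact (hz' k).2 (hmin (z' k) (hz' k).1 hleI)

/-- Multiorder principle, sufficiency: if `y = ⊕_k α_k ⊗ z^k` with `z^k ∈ S`, then for every
`i ∈ supp(y)` there is `k(i)` with `y_i = α_{k(i)} + z^{k(i)}_i`, `α_{k(i)} ⊗ z^{k(i)} ≤ y`,
and hence `z^{k(i)} ≤_i y`. Consequently, if `y` is `i`-minimal in `S` for some `i`, then `y`
is not a max-plus combination of elements of `S` that are not proportional to `y`. -/
theorem maxplus_multiorder_sufficiency {n m : ℕ} (S : Finset (Fin n → MP))
    (y : Fin n → MP) (hy : y ∈ S)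
    (z : Fin m → (Fin n → MP)) (α : Fin m → MP)
    (hzS : ∀ k, z k ∈ S)
    (hrep : ∀ j, y j = univ.sup fun k => α k + z k j) :
    (∀ i, y i ≠ ⊥ →
      ∃ k, y i = α k + z k i ∧ (∀ j, α k + z k j ≤ y j) ∧ leI i (z k) y) ∧
    ((∃ i, y i ≠ ⊥ ∧ ∀ w ∈ S, leI i w y → ∃ c : ℝ, ∀ j, w j = (c : MP) + y j) →
      ¬ ∃ (m' : ℕ) (z' : Fin m' → (Fin n → MP)) (α' : Fin m' → MP),
          (∀ k, z' k ∈ S ∧ ¬ ∃ c : ℝ, ∀ j, z' k j = (c : MP) + y j) ∧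
          ∀ j, y j = univ.sup fun k => α' k + z' k j) :=
  maxplus_multiorder_sufficiency_general S y z α hrep
end

section
/- Any two bases of a finitely generated max-plus cone K ⊆ (ℝ∪{-∞})ⁿ coincide up to scaling: if S and T are both independent generating sets of K, then there is a bijection φ: S → T such that φ(s) is a scalar multiple (in max-plus sense, i.e., a constant translate) of s for each s ∈ S. -/
open Finset

/-!
Every element `s` of an independent generating set `S` is extremal. Write `s = ⊕ₜ αₜ ⊗ t` over
another generating set `T`, and each `t = ⊕_z β_{t z} ⊗ z` over `S`; substituting gives
`s = ⊕_z γ_z ⊗ z` with `γ_s = ⊕ₜ (αₜ + β_{t s})`. Independence forces `γ_s = 0`: `γ_s > 0` is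
impossible at a finite coordinate of `s`, and if `γ_s < 0` the term of `s` could be dropped.
A `t` attaining `αₜ + β_{t s} = 0` satisfies `αₜ ⊗ t ≤ s` and `β_{t s} ⊗ s ≤ t`, so `t` is a
translate of `s`. Two distinct members of an independent set are never translates of each
other, so this matching `S → T` is injective, as is the reverse one `T → S`; hence it is a
bijection.
-/

namespace MP

section

variable {ι : Type*}

lemma add_finsetSup_s13 {κ : Type*} (c : MP) (s : Finset κ) (f : κ → MP) :
    c + s.sup f = s.sup fun i => c + f i :=
  apply_sup_eq_sup_comp_of_linearOrder (fun x : MP => c + x) (fun _ _ h => add_le_add le_rfl h)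
    (WithBot.add_bot c)

lemma finsetSup_add_s13 {κ : Type*} (s : Finset κ) (f : κ → MP) (c : MP) :
    s.sup f + c = s.sup fun i => f i + c := by
  simp only [add_comm _ c, add_finsetSup_s13]

def lincomb (S : Finset (ι → MP)) (α : (ι → MP) → MP) : ι → MP :=
  fun j => S.sup fun z => α z + z j

lemma lincomb_bot (S : Finset (ι → MP)) : lincomb S (fun _ => ⊥) = fun _ => ⊥ := by
  funext j
  simp [lincomb]

lemma lincomb_apply_of_mem [DecidableEq (ι → MP)] {S : Finset (ι → MP)} {s : ι → MP}
    (hs : s ∈ S) (α : (ι → MP) → MP) (j : ι) :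
    lincomb S α j = (α s + s j) ⊔ lincomb (S.erase s) α j := by
  rw [lincomb, ← insert_erase hs, sup_insert, erase_insert (notMem_erase s S)]
  rfl

lemma lincomb_ite [DecidableEq (ι → MP)] {S : Finset (ι → MP)} {x : ι → MP} (hx : x ∈ S)
    (c : MP) : lincomb S (fun z => if z = x then c else ⊥) = fun j => c + x j := by
  funext j
  rw [lincomb_apply_of_mem hx, if_pos rfl, sup_eq_left]
  exact ((Finset.sup_eq_bot_iff _ _).2 fun z hz => by simp [ne_of_mem_erase hz]).trans_le bot_le

lemma lincomb_comp {S T : Finset (ι → MP)} {β : (ι → MP) → (ι → MP) → MP}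
    (hT : ∀ t ∈ T, t = lincomb S (β t)) (α : (ι → MP) → MP) :
    lincomb T α = lincomb S fun z => T.sup fun t => α t + β t z := by
  funext j
  calc T.sup (fun t => α t + t j)
      = T.sup fun t => S.sup fun z => α t + (β t z + z j) :=
        sup_congr rfl fun t ht => by rw [congrFun (hT t ht) j, lincomb, add_finsetSup_s13]
    _ = S.sup fun z => T.sup fun t => α t + (β t z + z j) := Finset.sup_comm _ _ _
    _ = _ := sup_congr rfl fun z _ => by simp only [finsetSup_add_s13, add_assoc]

def IsTranslate (x y : ι → MP) : Prop :=
  ∃ c : ℝ, ∀ j, y j = c + x j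

lemma IsTranslate.symm {x y : ι → MP} (h : IsTranslate x y) : IsTranslate y x := by
  obtain ⟨c, hc⟩ := h
  refine ⟨-c, fun j => ?_⟩
  rw [hc, ← add_assoc, ← WithBot.coe_add, neg_add_cancel, WithBot.coe_zero, zero_add]

lemma IsTranslate.trans {x y z : ι → MP} (hxy : IsTranslate x y) (hyz : IsTranslate y z) :
    IsTranslate x z := by
  obtain ⟨c, hc⟩ := hxy
  obtain ⟨d, hd⟩ := hyz
  exact ⟨d + c, fun j => by rw [hd, hc, ← add_assoc, WithBot.coe_add]⟩

end

lemma eq_add_of_add_le_of_add_le {M : Type*} [AddCommMonoid M] [PartialOrder M]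
    [IsOrderedAddMonoid M] {a b x y : M} (hab : a + b = 0) (hy : a + y ≤ x) (hx : b + x ≤ y) :
    y = b + x := by
  refine le_antisymm ?_ hx
  calc y = b + (a + y) := by rw [← add_assoc, add_comm b a, hab, zero_add]
    _ ≤ b + x := by gcongr

end MP

open MP

section

variable {n : ℕ}

lemma mem_genBy_iff {S : Finset (Fin n → MP)} {x : Fin n → MP} :
    x ∈ genBy S ↔ ∃ α, x = lincomb S α := by
  simp [genBy, lincomb, funext_iff]

lemma mem_genBy_of_isTranslate {S : Finset (Fin n → MP)} {x y : Fin n → MP} (hx : x ∈ S)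
    (h : IsTranslate x y) : y ∈ genBy S := by
  classical
  obtain ⟨c, hc⟩ := h
  exact mem_genBy_iff.2 ⟨_, (funext hc).trans (lincomb_ite hx c).symm⟩

lemma mem_genBy_self {S : Finset (Fin n → MP)} {x : Fin n → MP} (hx : x ∈ S) :
    x ∈ genBy S :=
  mem_genBy_of_isTranslate hx ⟨0, fun _ => (zero_add _).symm⟩

namespace mpIndep

variable {S : Finset (Fin n → MP)}

lemma exists_ne_bot (hS : mpIndep S) {s : Fin n → MP} (hs : s ∈ S) : ∃ j, s j ≠ ⊥ := by
  by_contra! hbot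
  exact hS s hs (mem_genBy_iff.2 ⟨_, (funext hbot).trans (lincomb_bot _).symm⟩)

lemma eq_of_isTranslate (hS : mpIndep S) {x y : Fin n → MP} (hx : x ∈ S) (hy : y ∈ S)
    (h : IsTranslate x y) : x = y := by
  by_contra hne
  exact hS y hy (mem_genBy_of_isTranslate (mem_erase.2 ⟨hne, hx⟩) h)

lemma coeff_self_eq_zero (hS : mpIndep S) {s : Fin n → MP} (hs : s ∈ S)
    {γ : (Fin n → MP) → MP} (h : s = lincomb S γ) : γ s = 0 := by
  classical
  have hsplit (j : Fin n) : s j = (γ s + s j) ⊔ lincomb (S.erase s) γ j := by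
    conv_lhs => rw [h, lincomb_apply_of_mem hs]
  obtain ⟨j₀, hj₀⟩ := hS.exists_ne_bot hs
  have hle : γ s ≤ 0 := by
    rw [← WithBot.add_le_add_iff_right hj₀, zero_add]
    exact le_sup_left.trans_eq (hsplit j₀).symm
  refine le_antisymm hle (not_lt.1 fun hlt => hS s hs (mem_genBy_iff.2 ⟨γ, funext fun j => ?_⟩))
  -- with `γ s < 0`, the term of `s` never attains the maximum at a finite coordinate
  refine le_antisymm ?_ ((hsplit j).symm ▸ le_sup_right)
  by_cases hj : s j = ⊥
  · exact hj ▸ bot_le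
  have hlt' : γ s + s j < s j := by
    simpa using WithBot.add_lt_add_right hj hlt
  rcases le_total (γ s + s j) (lincomb (S.erase s) γ j) with hr | hr
  · rw [hsplit j, sup_eq_right.2 hr]
  · exact absurd (sup_eq_left.2 hr ▸ hsplit j) hlt'.ne'

lemma isTranslate_of_mem_genBy (hS : mpIndep S) {T : Finset (Fin n → MP)} {s : Fin n → MP}
    (hs : s ∈ S) (hsT : s ∈ genBy T) (hTS : ∀ t ∈ T, t ∈ genBy S) :
    ∃ t ∈ T, IsTranslate s t := by
  obtain ⟨α, hα⟩ := mem_genBy_iff.1 hsT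
  choose! β hβ using fun t ht => mem_genBy_iff.1 (hTS t ht)
  have hγ : (T.sup fun t => α t + β t s) = 0 :=
    hS.coeff_self_eq_zero hs (hα.trans (lincomb_comp hβ α))
  have hT : T.Nonempty := nonempty_iff_ne_empty.2 fun hT => by simp [hT] at hγ
  obtain ⟨t, ht, hmax⟩ := exists_mem_eq_sup T hT fun t => α t + β t s
  have h0 : α t + β t s = 0 := hmax ▸ hγ
  have hβts : β t s ≠ ⊥ := fun hbot => by simp [hbot] at h0
  obtain ⟨c, hc⟩ := WithBot.ne_bot_iff_exists.1 hβts
  refine ⟨t, ht, c, fun j => hc ▸ eq_add_of_add_le_of_add_le h0 ?_ ?_⟩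
  · exact (congrFun hα j).symm ▸ le_sup (f := fun t => α t + t j) ht
  · exact (congrFun (hβ t ht) j).symm ▸ le_sup (f := fun z => β t z + z j) hs

lemma exists_injective_isTranslate (hS : mpIndep S) {T : Finset (Fin n → MP)}
    (h : ∀ s ∈ S, ∃ t ∈ T, IsTranslate s t) :
    ∃ φ : {s // s ∈ S} → {t // t ∈ T}, Function.Injective φ ∧
      ∀ s, IsTranslate s.1 (φ s).1 := by
  choose f hfT hf using h
  refine ⟨fun s => ⟨f s s.2, hfT s s.2⟩, fun s₁ s₂ h₁₂ => Subtype.ext ?_, fun s => hf s s.2⟩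
  have hf₁₂ : f s₁ s₁.2 = f s₂ s₂.2 := congrArg Subtype.val h₁₂
  exact hS.eq_of_isTranslate s₁.2 s₂.2 ((hf _ s₁.2).trans (hf₁₂ ▸ (hf _ s₂.2).symm))

end mpIndep

end

/-- Uniqueness of bases: any two independent generating sets of a finitely generated max-plus
cone are in bijection, matching elements up to a (real) scalar, i.e. a constant translate. -/
theorem maxplus_basis_unique_up_to_scaling {n : ℕ}
    (S T : Finset (Fin n → MP)) (K : Set (Fin n → MP))
    (hS : mpIndep S) (hT : mpIndep T) (hSK : genBy S = K) (hTK : genBy T = K) :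
    ∃ φ : {s // s ∈ S} → {t // t ∈ T}, Function.Bijective φ ∧
      ∀ s : {s // s ∈ S}, ∃ c : ℝ, ∀ j, (φ s).1 j = (c : MP) + s.1 j := by
  have hST : ∀ s ∈ S, s ∈ genBy T := fun s hs => hTK ▸ hSK ▸ mem_genBy_self hs
  have hTS : ∀ t ∈ T, t ∈ genBy S := fun t ht => hSK ▸ hTK ▸ mem_genBy_self ht
  obtain ⟨φ, hφ, hφS⟩ := hS.exists_injective_isTranslate fun s hs =>
    hS.isTranslate_of_mem_genBy hs (hST s hs) hTS
  obtain ⟨ψ, hψ, -⟩ := hT.exists_injective_isTranslate fun t ht =>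
    hT.isTranslate_of_mem_genBy ht (hTS t ht) hST
  have hcard :=
    le_antisymm (Fintype.card_le_of_injective φ hφ) (Fintype.card_le_of_injective ψ hψ)
  exact ⟨φ, (Fintype.bijective_iff_injective_and_card φ).2 ⟨hφ, hcard⟩, hφS⟩
end

section
/- In a max-plus cone K ⊆ (ℝ∪{-∞})ⁿ generated by a finite set S, every extremal of K is proportional to an element of S: if y ∈ K satisfies (y = u ⊕ v with u,v ∈ K implies y = u or y = v) and y is not the zero vector, then y = α ⊗ z for some z ∈ S and α ∈ ℝ. -/
/-
Write the extremal `y` as a max-plus combination `⊕_{z ∈ T} α_z ⊗ z` and peel off one term at a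
time: `y = (α_z ⊗ z) ⊕ (⊕_{w ∈ T \ {z}} α_w ⊗ w)` with both summands in the cone, so extremality
forces `y` to equal one of them. Descending through ever smaller combinations must stop at a
single term, because the empty combination is the zero vector; and `α_z ≠ -∞` since `y ≠ 0`.
-/

open Finset

def mpComb {n : ℕ} (T : Finset (Fin n → MP)) (α : (Fin n → MP) → MP) : Fin n → MP :=
  fun j => T.sup fun z => α z + z j

lemma mpComb_mem_genBy {n : ℕ} {S T : Finset (Fin n → MP)} (hT : T ⊆ S)
    (α : (Fin n → MP) → MP) : mpComb T α ∈ genBy S := by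
  classical
  refine ⟨fun w => if w ∈ T then α w else ⊥, fun j => ?_⟩
  simp only [mpComb, ite_add, WithBot.bot_add, sup_ite, sup_bot, sup_bot_eq,
    filter_mem_eq_inter, inter_eq_right.mpr hT]

lemma mpComb_empty {n : ℕ} (α : (Fin n → MP) → MP) : mpComb ∅ α = fun _ => ⊥ := by
  funext j
  exact sup_empty

lemma mpComb_insert {n : ℕ} [DecidableEq (Fin n → MP)] (T : Finset (Fin n → MP))
    (α : (Fin n → MP) → MP) (z : Fin n → MP) :
    mpComb (insert z T) α = fun j => (α z + z j) ⊔ mpComb T α j := by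
  funext j
  exact sup_insert

lemma exists_eq_term_of_extremal {n : ℕ} {S : Finset (Fin n → MP)} {y : Fin n → MP}
    (hy0 : y ≠ fun _ => ⊥)
    (hext : ∀ u ∈ genBy S, ∀ v ∈ genBy S, y = (fun j => u j ⊔ v j) → y = u ∨ y = v)
    (α : (Fin n → MP) → MP) (T : Finset (Fin n → MP)) (hT : T ⊆ S) (hy : y = mpComb T α) :
    ∃ z ∈ T, y = fun j => α z + z j := by
  classical
  induction T using Finset.induction_on with
  | empty => exact absurd (hy.trans (mpComb_empty α)) hy0
  | insert z T _ ih =>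
    have hzS : z ∈ S := hT (mem_insert_self z T)
    have hTS : T ⊆ S := (subset_insert z T).trans hT
    have hterm : (fun j => α z + z j) = mpComb {z} α := by
      funext j
      exact sup_singleton.symm
    rw [mpComb_insert] at hy
    rcases hext _ (hterm ▸ mpComb_mem_genBy (singleton_subset_iff.mpr hzS) α)
      _ (mpComb_mem_genBy hTS α) hy with hyz | hyT
    · exact ⟨z, mem_insert_self z T, hyz⟩
    · obtain ⟨w, hwT, hyw⟩ := ih hTS hyT
      exact ⟨w, mem_insert_of_mem hwT, hyw⟩

/-- Every non-zero extremal of a max-plus cone generated by a finite set `S` is a (real) scalar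
multiple of an element of `S`. -/
theorem maxplus_extremal_proportional_to_generator {n : ℕ}
    (S : Finset (Fin n → MP)) (y : Fin n → MP)
    (hyK : y ∈ genBy S) (hy0 : y ≠ fun _ => ⊥)
    (hext : ∀ u ∈ genBy S, ∀ v ∈ genBy S, y = (fun j => u j ⊔ v j) → y = u ∨ y = v) :
    ∃ z ∈ S, ∃ c : ℝ, ∀ j, y j = (c : MP) + z j := by
  obtain ⟨α, hα⟩ := hyK
  obtain ⟨z, hzS, hyz⟩ :=
    exists_eq_term_of_extremal hy0 hext α S subset_rfl (funext hα)
  obtain ⟨c, hc⟩ : ∃ c : ℝ, (c : MP) = α z := by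
    refine WithBot.ne_bot_iff_exists.mp fun hbot => hy0 ?_
    simp only [hyz, hbot, WithBot.bot_add]
  exact ⟨z, hzS, c, fun j => by rw [hyz, hc]⟩
end

section
/- For the two-inequality system with k = l ∈ J₁ ∩ J₂: the set S^{kk} = {x : ⊕_{i∈I₁}(a_{1i}-b_{1k})⊗x_i ≤ x_k, ⊕_{i∈I₂}(a_{2i}-b_{2k})⊗x_i ≤ x_k} is generated by the vectors e_i for i ∉ I₁∪I₂, γ¹_{ki}⊗e_k ⊕ e_i for i ∈ I₁\I₂, γ²_{ki}⊗e_k ⊕ e_i for i ∈ I₂\I₁, and (γ¹_{ki} ⊕ γ²_{ki})⊗e_k ⊕ e_i for i ∈ I₁∩I₂, where γ¹_{ki} = a_{1i} - b_{1k} and γ²_{ki} = a_{2i} - b_{2k}. -/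
open Finset

/-!
The two inequalities merge into one, `⊕_{i ≠ k} c_i ⊗ x_i ≤ x_k` with `c_i = γ¹_{ki} ⊕ γ²_{ki}`
(each `γ` read as `-∞` outside its index set), because `k ∉ I₁ ∪ I₂`. A cone of that shape is
generated by the vectors `c_i ⊗ e_k ⊕ e_i`: each of them satisfies the inequality, and every
solution `x` is the combination `⊕_i x_i ⊗ (c_i ⊗ e_k ⊕ e_i)`.
-/

lemma sup_add_le_iff_of_notMem {ι : Type*} [DecidableEq ι] {γ x : ι → MP} {I : Finset ι}
    {k : ι} (hk : k ∉ I) :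
    (I.sup fun i => γ i + x i) ≤ x k ↔ ∀ i ≠ k, (if i ∈ I then γ i else ⊥) + x i ≤ x k := by
  rw [Finset.sup_le_iff]
  refine ⟨fun h i _ => ?_, fun h i hi => ?_⟩
  · split_ifs with hi
    · exact h i hi
    · simp
  · simpa [hi] using h i (ne_of_mem_of_not_mem hi hk)

section SingleInequality

variable {ι : Type*} [Fintype ι] [DecidableEq ι]

/-- The generator `c i ⊗ e_k ⊕ e_i`; for `i = k` it is just `e_k`. -/
def kColumnGen (c : ι → MP) (k i : ι) : ι → MP :=
  fun j => if j = i then 0 else if j = k then c i else ⊥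

lemma sup_add_kColumnGen_of_ne {c α : ι → MP} {k j : ι} (hjk : j ≠ k) :
    (univ.sup fun i => α i + kColumnGen c k i j) = α j := by
  refine le_antisymm (Finset.sup_le fun i _ => ?_) ?_
  · by_cases hji : j = i
    · simp [kColumnGen, hji]
    · simp [kColumnGen, hji, hjk]
  · simpa [kColumnGen] using le_sup (f := fun i => α i + kColumnGen c k i j) (mem_univ j)

theorem exists_sup_add_kColumnGen_iff {c x : ι → MP} {k : ι} :
    (∃ α : ι → MP, ∀ j, x j = univ.sup fun i => α i + kColumnGen c k i j) ↔
      ∀ i ≠ k, c i + x i ≤ x k := by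
  constructor
  · rintro ⟨α, hα⟩ i hik
    have hxi : x i = α i := (hα i).trans (sup_add_kColumnGen_of_ne hik)
    have hterm : α i + kColumnGen c k i k ≤ x k :=
      (hα k).symm ▸ le_sup (f := fun i => α i + kColumnGen c k i k) (mem_univ i)
    simpa [kColumnGen, hxi, Ne.symm hik, add_comm] using hterm
  · intro h
    refine ⟨x, fun j => le_antisymm ?_ (Finset.sup_le fun i _ => ?_)⟩
    · simpa [kColumnGen] using le_sup (f := fun i => x i + kColumnGen c k i j) (mem_univ j)
    · by_cases hji : j = i
      · simp [kColumnGen, hji]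
      by_cases hjk : j = k
      · subst hjk
        simpa [kColumnGen, hji, add_comm] using h i (Ne.symm hji)
      · simp [kColumnGen, hji, hjk]

end SingleInequality

/-- Case `k = l ∈ J₁ ∩ J₂`: the set
`S^{kk} = {x : ⊕_{i∈I₁} γ¹_{ki}⊗x_i ≤ x_k, ⊕_{i∈I₂} γ²_{ki}⊗x_i ≤ x_k}` is generated by the
vectors `e_i` (`i ∉ I₁∪I₂`), `γ¹_{ki}⊗e_k ⊕ e_i` (`i ∈ I₁∖I₂`), `γ²_{ki}⊗e_k ⊕ e_i`
(`i ∈ I₂∖I₁`), and `(γ¹_{ki} ⊕ γ²_{ki})⊗e_k ⊕ e_i` (`i ∈ I₁∩I₂`), where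
`γ¹_{ki} = a_{1i} - b_{1k}`, `γ²_{ki} = a_{2i} - b_{2k}`. -/
theorem maxplus_Skk_generators {n : ℕ} (a1 a2 : Fin n → MP)
    (I1 I2 : Finset (Fin n)) (k : Fin n) (hk : k ∉ I1 ∪ I2) (b1k b2k : ℝ) :
    {x : Fin n → MP |
        (I1.sup fun i => (a1 i + ((-b1k : ℝ) : MP)) + x i) ≤ x k ∧
        (I2.sup fun i => (a2 i + ((-b2k : ℝ) : MP)) + x i) ≤ x k}
      = {x : Fin n → MP | ∃ α : Fin n → MP, ∀ j,
          x j = univ.sup fun i => α i +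
            (if j = i then (0 : MP)
             else if j = k then
               (if i ∈ I1 then a1 i + ((-b1k : ℝ) : MP) else ⊥) ⊔
               (if i ∈ I2 then a2 i + ((-b2k : ℝ) : MP) else ⊥)
             else ⊥)} := by
  ext x
  rw [mem_union, not_or] at hk
  change _ ↔ ∃ α : Fin n → MP, ∀ j, x j = univ.sup fun i => α i + kColumnGen (fun i =>
    (if i ∈ I1 then a1 i + ((-b1k : ℝ) : MP) else ⊥) ⊔
    (if i ∈ I2 then a2 i + ((-b2k : ℝ) : MP) else ⊥)) k i j
  simp only [Set.mem_ofPred_eq, exists_sup_add_kColumnGen_iff, sup_add_le_iff_of_notMem hk.1,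
    sup_add_le_iff_of_notMem hk.2, max_add, max_le_iff, forall_and]
end

section
/- For the two-inequality system with k ∈ J₁∩I₂ and l ∈ J₂∩I₁ (so both cross-coefficients γ¹_{kl} and γ²_{lk} are finite): if γ¹_{kl} + γ²_{lk} > 0, then S^{kl} = {x : ⊕_{i∈I₁}γ¹_{ki}⊗x_i ≤ x_k, ⊕_{i∈I₂}γ²_{li}⊗x_i ≤ x_l} consists exactly of the vectors x with x_i = -∞ for all i ∈ I₁ ∪ I₂ ∪ {k,l}; i.e., S^{kl} is generated by {e_i : i ∉ I₁∪I₂∪{k,l}}. -/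
/-!
Chaining the two constraints through the cross-coefficients gives
`x_k ≥ γ¹_{kl} + γ²_{lk} + x_k`, which with a positive cycle weight forces `x_k = x_l = -∞`.
The constraints then read `γ¹_{ki} + x_i = -∞` on `I₁` and `γ²_{li} + x_i = -∞` on `I₂`, and the
coefficients there are finite.
-/

open Finset

namespace WithBot

variable {α : Type*}

theorem eq_bot_of_add_le_self [AddCommMonoid α] [LinearOrder α] [IsOrderedCancelAddMonoid α]
    {c x : WithBot α} (hc : 0 < c) (h : c + x ≤ x) : x = ⊥ := by
  induction x with
  | bot => rfl
  | coe a =>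
    induction c with
    | bot => exact absurd hc not_lt_bot
    | coe t =>
      have ht : 0 < t := by exact_mod_cast hc
      have hle : t + a ≤ a := by exact_mod_cast h
      exact absurd hle (lt_add_of_pos_left a ht).not_ge

theorem eq_bot_and_eq_bot_of_pos_cycle [AddCommMonoid α] [LinearOrder α]
    [IsOrderedCancelAddMonoid α] {c d x y : WithBot α} (hcd : 0 < c + d)
    (hxy : c + y ≤ x) (hyx : d + x ≤ y) : x = ⊥ ∧ y = ⊥ := by
  constructor
  · refine eq_bot_of_add_le_self hcd ?_
    calc c + d + x = c + (d + x) := add_assoc c d x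
      _ ≤ c + y := by gcongr
      _ ≤ x := hxy
  · refine eq_bot_of_add_le_self (add_comm c d ▸ hcd) ?_
    calc d + c + y = d + (c + y) := add_assoc d c y
      _ ≤ d + x := by gcongr
      _ ≤ y := hyx

theorem finset_sup_add_eq_bot_iff [LinearOrder α] [Add α] {ι : Type*} {s : Finset ι}
    {c x : ι → WithBot α} (hc : ∀ i ∈ s, c i ≠ ⊥) :
    s.sup (fun i => c i + x i) = ⊥ ↔ ∀ i ∈ s, x i = ⊥ := by
  simp only [Finset.sup_eq_bot_iff, add_eq_bot]
  exact forall₂_congr fun i hi => or_iff_right (hc i hi)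

end WithBot

theorem maxplus_Skl_positive_cycle_general {n : ℕ} (a1 a2 : Fin n → MP)
    (I1 I2 : Finset (Fin n)) (k l : Fin n) (b1k b2l : ℝ)
    (hlI1 : l ∈ I1) (hkI2 : k ∈ I2)
    (ha1 : ∀ i ∈ I1, a1 i ≠ ⊥) (ha2 : ∀ i ∈ I2, a2 i ≠ ⊥)
    (hcyc : 0 < (a1 l + ((-b1k : ℝ) : MP)) + (a2 k + ((-b2l : ℝ) : MP))) :
    {x : Fin n → MP |
        (I1.sup fun i => (a1 i + ((-b1k : ℝ) : MP)) + x i) ≤ x k ∧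
        (I2.sup fun i => (a2 i + ((-b2l : ℝ) : MP)) + x i) ≤ x l}
      = {x : Fin n → MP | ∀ i, (i ∈ I1 ∨ i ∈ I2 ∨ i = k ∨ i = l) → x i = ⊥} := by
  have hγ1 : ∀ i ∈ I1, a1 i + ((-b1k : ℝ) : MP) ≠ ⊥ := fun i hi =>
    WithBot.add_ne_bot.2 ⟨ha1 i hi, WithBot.coe_ne_bot⟩
  have hγ2 : ∀ i ∈ I2, a2 i + ((-b2l : ℝ) : MP) ≠ ⊥ := fun i hi =>
    WithBot.add_ne_bot.2 ⟨ha2 i hi, WithBot.coe_ne_bot⟩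
  ext x
  constructor
  · rintro ⟨h1, h2⟩
    obtain ⟨hk, hl⟩ := WithBot.eq_bot_and_eq_bot_of_pos_cycle hcyc
      ((le_sup (f := fun i => (a1 i + ((-b1k : ℝ) : MP)) + x i) hlI1).trans h1)
      ((le_sup (f := fun i => (a2 i + ((-b2l : ℝ) : MP)) + x i) hkI2).trans h2)
    have hI1 := (WithBot.finset_sup_add_eq_bot_iff hγ1).1 (le_bot_iff.1 (hk ▸ h1))
    have hI2 := (WithBot.finset_sup_add_eq_bot_iff hγ2).1 (le_bot_iff.1 (hl ▸ h2))
    rintro i (hi | hi | rfl | rfl)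
    exacts [hI1 i hi, hI2 i hi, hk, hl]
  · intro h
    exact ⟨((WithBot.finset_sup_add_eq_bot_iff hγ1).2 fun i hi => h i (.inl hi)).trans_le bot_le,
      ((WithBot.finset_sup_add_eq_bot_iff hγ2).2 fun i hi => h i (.inr (.inl hi))).trans_le bot_le⟩

/-- Case `k ∈ J₁ ∩ I₂`, `l ∈ J₂ ∩ I₁` with positive cycle: if `γ¹_{kl} + γ²_{lk} > 0`, then
`S^{kl}` consists exactly of the vectors vanishing on `I₁ ∪ I₂ ∪ {k, l}` (so it is generated
by the unit vectors `e_i`, `i ∉ I₁ ∪ I₂ ∪ {k, l}`). -/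
theorem maxplus_Skl_positive_cycle {n : ℕ} (a1 a2 : Fin n → MP)
    (I1 I2 : Finset (Fin n)) (k l : Fin n) (b1k b2l : ℝ)
    (hkI1 : k ∉ I1) (hlI2 : l ∉ I2) (hlI1 : l ∈ I1) (hkI2 : k ∈ I2)
    (ha1 : ∀ i ∈ I1, a1 i ≠ ⊥) (ha2 : ∀ i ∈ I2, a2 i ≠ ⊥)
    (hcyc : 0 < (a1 l + ((-b1k : ℝ) : MP)) + (a2 k + ((-b2l : ℝ) : MP))) :
    {x : Fin n → MP |
        (I1.sup fun i => (a1 i + ((-b1k : ℝ) : MP)) + x i) ≤ x k ∧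
        (I2.sup fun i => (a2 i + ((-b2l : ℝ) : MP)) + x i) ≤ x l}
      = {x : Fin n → MP | ∀ i, (i ∈ I1 ∨ i ∈ I2 ∨ i = k ∨ i = l) → x i = ⊥} :=
  maxplus_Skl_positive_cycle_general a1 a2 I1 I2 k l b1k b2l hlI1 hkI2 ha1 ha2 hcyc
end
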